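/- If X is a star-Lindelöf space and X is the union of fewer than 𝔟 many Hurewicz subspaces, then X is star-Hurewicz. -/
import Mathlib


open Set Filter Topology

/-- `𝒰` is an open cover of the space `X`. -/
def IsOpenCover {X : Type} [TopologicalSpace X] (𝒰 : Set (Set X)) : Prop :=
  (∀ u ∈ 𝒰, IsOpen u) ∧ ⋃₀ 𝒰 = Set.univ

/-- The star of a set `A` with respect to a collection `𝒰`. -/
def st {X : Type} (A : Set X) (𝒰 : Set (Set X)) : Set X :=
  ⋃₀ {u ∈ 𝒰 | (u ∩ A).Nonempty}
/-- Eventual domination `f ≤* g`. -/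
def EvLE (f g : ℕ → ℕ) : Prop := ∀ᶠ n in Filter.atTop, f n ≤ g n

/-- The dominating number `𝔡`. -/
noncomputable def dominatingNumber : Cardinal :=
  sInf {c | ∃ D : Set (ℕ → ℕ),
    (∀ g : ℕ → ℕ, ∃ f ∈ D, EvLE g f) ∧ Cardinal.mk D = c}

/-- The bounding number `𝔟`. -/
noncomputable def boundingNumber : Cardinal :=
  sInf {c | ∃ B : Set (ℕ → ℕ),
    (¬ ∃ g : ℕ → ℕ, ∀ f ∈ B, EvLE f g) ∧ Cardinal.mk B = c}
/-- The Menger property `S_fin(𝒪,𝒪)`. -/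
def MengerSpace (X : Type) [TopologicalSpace X] : Prop :=
  ∀ 𝒰 : ℕ → Set (Set X), (∀ n, IsOpenCover (𝒰 n)) →
    ∃ 𝒱 : ℕ → Set (Set X), (∀ n, (𝒱 n).Finite ∧ 𝒱 n ⊆ 𝒰 n) ∧
      ∀ x : X, ∃ n, x ∈ ⋃₀ 𝒱 n

/-- The Hurewicz property. -/
def HurewiczSpace (X : Type) [TopologicalSpace X] : Prop :=
  ∀ 𝒰 : ℕ → Set (Set X), (∀ n, IsOpenCover (𝒰 n)) →
    ∃ 𝒱 : ℕ → Set (Set X), (∀ n, (𝒱 n).Finite ∧ 𝒱 n ⊆ 𝒰 n) ∧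
      ∀ x : X, ∀ᶠ n in Filter.atTop, x ∈ ⋃₀ 𝒱 n

/-- The star-Menger property. -/
def StarMengerSpace (X : Type) [TopologicalSpace X] : Prop :=
  ∀ 𝒰 : ℕ → Set (Set X), (∀ n, IsOpenCover (𝒰 n)) →
    ∃ 𝒱 : ℕ → Set (Set X), (∀ n, (𝒱 n).Finite ∧ 𝒱 n ⊆ 𝒰 n) ∧
      ∀ x : X, ∃ n, x ∈ st (⋃₀ 𝒱 n) (𝒰 n)

/-- The star-Hurewicz property. -/
def StarHurewiczSpace (X : Type) [TopologicalSpace X] : Prop :=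
  ∀ 𝒰 : ℕ → Set (Set X), (∀ n, IsOpenCover (𝒰 n)) →
    ∃ 𝒱 : ℕ → Set (Set X), (∀ n, (𝒱 n).Finite ∧ 𝒱 n ⊆ 𝒰 n) ∧
      ∀ x : X, ∀ᶠ n in Filter.atTop, x ∈ st (⋃₀ 𝒱 n) (𝒰 n)

/-- The strongly star-Menger property. -/
def StronglyStarMengerSpace (X : Type) [TopologicalSpace X] : Prop :=
  ∀ 𝒰 : ℕ → Set (Set X), (∀ n, IsOpenCover (𝒰 n)) →
    ∃ F : ℕ → Set X, (∀ n, (F n).Finite) ∧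
      ∀ x : X, ∃ n, x ∈ st (F n) (𝒰 n)

/-- The strongly star-Hurewicz property. -/
def StronglyStarHurewiczSpace (X : Type) [TopologicalSpace X] : Prop :=
  ∀ 𝒰 : ℕ → Set (Set X), (∀ n, IsOpenCover (𝒰 n)) →
    ∃ F : ℕ → Set X, (∀ n, (F n).Finite) ∧
      ∀ x : X, ∀ᶠ n in Filter.atTop, x ∈ st (F n) (𝒰 n)

/-- The star-Lindelöf property. -/
def StarLindelofSpace (X : Type) [TopologicalSpace X] : Prop :=
  ∀ 𝒰 : Set (Set X), IsOpenCover 𝒰 →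
    ∃ 𝒱 ⊆ 𝒰, 𝒱.Countable ∧ st (⋃₀ 𝒱) 𝒰 = Set.univ

/-- The strongly star-Lindelöf property. -/
def StronglyStarLindelofSpace (X : Type) [TopologicalSpace X] : Prop :=
  ∀ 𝒰 : Set (Set X), IsOpenCover 𝒰 →
    ∃ C : Set X, C.Countable ∧ st C 𝒰 = Set.univ

lemma st_open {X : Type} [TopologicalSpace X] (A : Set X) (𝒰 : Set (Set X))
    (h : ∀ u ∈ 𝒰, IsOpen u) : IsOpen (st A 𝒰) :=
  isOpen_sUnion fun u hu => h u hu.1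

lemma mem_st_iff {X : Type} {x : X} {A : Set X} {𝒰 : Set (Set X)} :
    x ∈ st A 𝒰 ↔ ∃ u ∈ 𝒰, (u ∩ A).Nonempty ∧ x ∈ u := by
  simp only [st, Set.mem_sUnion, Set.mem_setOf_eq]
  tauto

lemma bounded_of_lt_b {ι : Type} (f : ι → ℕ → ℕ)
    (h : Cardinal.mk ι < boundingNumber) : ∃ g : ℕ → ℕ, ∀ i, EvLE (f i) g := by
  by_contra hc
  push_neg at hc
  have hmem : Cardinal.mk (Set.range f) ∈
      {c | ∃ B : Set (ℕ → ℕ), (¬ ∃ g : ℕ → ℕ, ∀ f ∈ B, EvLE f g) ∧ Cardinal.mk B = c} := by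
    refine ⟨Set.range f, ?_, rfl⟩
    rintro ⟨g, hg⟩
    obtain ⟨i, hi⟩ := hc g
    exact hi (hg (f i) ⟨i, rfl⟩)
  have h1 : boundingNumber ≤ Cardinal.mk (Set.range f) := csInf_le' hmem
  exact absurd (h1.trans (Cardinal.mk_range_le)) (not_le.mpr h)

theorem stmt (X : Type) [TopologicalSpace X] (hX : StarLindelofSpace X)
    (ι : Type) (Y : ι → Set X)
    (hcard : Cardinal.mk ι < boundingNumber)
    (hY : ∀ i, HurewiczSpace (Y i))
    (hcover : ⋃ i, Y i = Set.univ) :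
    StarHurewiczSpace X := by
  classical
  intro 𝒰 h𝒰
  by_cases hE : IsEmpty X
  · exact ⟨fun _ => ∅, fun n => ⟨Set.finite_empty, Set.empty_subset _⟩,
      fun x => (hE.false x).elim⟩
  rw [not_isEmpty_iff] at hE
  choose W hWsub hWcount hWst using fun n => hX (𝒰 n) (h𝒰 n)
  have hWne : ∀ n, (W n).Nonempty := by
    intro n
    by_contra h
    rw [Set.not_nonempty_iff_eq_empty] at h
    obtain ⟨x⟩ := hE
    have hx : x ∈ st (⋃₀ W n) (𝒰 n) := by rw [hWst n]; exact Set.mem_univ x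
    obtain ⟨u, hu, ⟨y, hy, hy'⟩, hxu⟩ := mem_st_iff.mp hx
    simp [h] at hy'
  choose w hw using fun n => Set.Countable.exists_eq_range (hWcount n) (hWne n)
  have hwmem : ∀ n k, w n k ∈ 𝒰 n := fun n k => hWsub n ((hw n) ▸ Set.mem_range_self k)
  set G : ℕ → ℕ → Set X := fun n m => ⋃ k ∈ Finset.range (m + 1), st (w n k) (𝒰 n) with hG
  have hGmono : ∀ n, Monotone (G n) := by
    intro n m m' hmm'
    intro x hx
    simp only [hG, Set.mem_iUnion, Finset.mem_range] at hx ⊢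
    obtain ⟨k, hk, hxk⟩ := hx
    exact ⟨k, by omega, hxk⟩
  have hGopen : ∀ n m, IsOpen (G n m) := by
    intro n m
    exact isOpen_biUnion fun k _ => st_open _ _ (h𝒰 n).1
  have hGcov : ∀ n (x : X), ∃ m, x ∈ G n m := by
    intro n x
    have hx : x ∈ st (⋃₀ W n) (𝒰 n) := by rw [hWst n]; exact Set.mem_univ x
    obtain ⟨u, hu, ⟨y, hyu, hy'⟩, hxu⟩ := mem_st_iff.mp hx
    obtain ⟨v, hv, hyv⟩ := hy'
    obtain ⟨k, hk⟩ : ∃ k, w n k = v := by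
      have := (hw n) ▸ hv; exact this
    refine ⟨k, ?_⟩
    simp only [hG, Set.mem_iUnion]
    refine ⟨k, Finset.self_mem_range_succ k, ?_⟩
    exact mem_st_iff.mpr ⟨u, hu, ⟨y, hyu, hk ▸ hyv⟩, hxu⟩
  -- For each i, apply Hurewicz of Y i to the covers by preimages of G n m
  have key : ∀ i, ∃ f : ℕ → ℕ, ∀ x : Y i, ∀ᶠ n in Filter.atTop, (x : X) ∈ G n (f n) := by
    intro i
    set 𝒰' : ℕ → Set (Set (Y i)) :=
      fun n => {s | ∃ m, s = Subtype.val ⁻¹' (G n m)} with h𝒰'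
    have hoc : ∀ n, IsOpenCover (𝒰' n) := by
      intro n
      constructor
      · rintro u ⟨m, rfl⟩
        exact (hGopen n m).preimage continuous_subtype_val
      · apply Set.eq_univ_of_forall
        intro x
        obtain ⟨m, hm⟩ := hGcov n (x : X)
        exact ⟨Subtype.val ⁻¹' (G n m), ⟨m, rfl⟩, hm⟩
    obtain ⟨𝒱', h𝒱', hpt⟩ := hY i 𝒰' hoc
    have hbound : ∀ n, ∃ N, ⋃₀ 𝒱' n ⊆ Subtype.val ⁻¹' (G n N) := by
      intro n
      have hfin := (h𝒱' n).1
      have hsub := (h𝒱' n).2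
      have hm : ∀ v ∈ hfin.toFinset, ∃ m, v ⊆ Subtype.val ⁻¹' (G n m) := by
        intro v hv
        rw [hfin.mem_toFinset] at hv
        obtain ⟨m, rfl⟩ := hsub hv
        exact ⟨m, le_refl _⟩
      choose mf hmf using hm
      refine ⟨hfin.toFinset.sup (fun v => if h : v ∈ hfin.toFinset then mf v h else 0), ?_⟩
      rintro x ⟨v, hv, hxv⟩
      have hv' : v ∈ hfin.toFinset := hfin.mem_toFinset.mpr hv
      have h1 : x ∈ Subtype.val ⁻¹' (G n (mf v hv')) := hmf v hv' hxv
      have h2 : mf v hv' ≤ hfin.toFinset.sup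
          (fun v => if h : v ∈ hfin.toFinset then mf v h else 0) := by
        have := Finset.le_sup (f := fun v => if h : v ∈ hfin.toFinset then mf v h else 0) hv'
        simpa [hv'] using this
      exact hGmono n h2 h1
    choose f hf using hbound
    exact ⟨f, fun x => (hpt x).mono fun n hn => hf n hn⟩
  choose f hf using key
  obtain ⟨g, hg⟩ := bounded_of_lt_b f hcard
  refine ⟨fun n => w n '' {k | k ≤ g n}, ?_, ?_⟩
  · intro n
    constructor
    · exact Set.Finite.image _ (Set.finite_Iic (g n))
    · rintro u ⟨k, _, rfl⟩
      exact hwmem n k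
  · intro x
    have hx : ∃ i, x ∈ Y i := by
      have := hcover ▸ Set.mem_univ x
      simpa using this
    obtain ⟨i, hxi⟩ := hx
    have h1 := hf i ⟨x, hxi⟩
    have h2 := hg i
    filter_upwards [h1, h2] with n hn1 hn2
    have hxg : x ∈ G n (g n) := hGmono n hn2 hn1
    simp only [hG, Set.mem_iUnion] at hxg
    obtain ⟨k, hk, hxk⟩ := hxg
    rw [Finset.mem_range] at hk
    obtain ⟨u, hu, ⟨y, hyu, hyw⟩, hxu⟩ := mem_st_iff.mp hxk
    refine mem_st_iff.mpr ⟨u, hu, ⟨y, hyu, ?_⟩, hxu⟩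
    exact ⟨w n k, ⟨k, Set.mem_setOf_eq ▸ Nat.lt_succ_iff.mp hk, rfl⟩, hyw⟩
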